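/- For the totally directed Bouchaud trap model with heavy-tailed trap depths of index α ∈ (0,1), shallow traps are negligible: for every ε ∈ (0,1), the normalized total time spent in traps of depth at most n^{(1−ε)/α}, namely n^{−1/α} · Σ_{i=0}^{n−1} τ_i e_i · 1{τ_i ≤ n^{(1−ε)/α}}, converges to 0 in probability as n → ∞. -/

import Mathlib

/-!
A first-moment argument. The tail assumption gives `ℙ[τ ≥ t] ≤ C t^{-α}` for all `t > 0`, so by
the layer-cake formula `𝔼[τ; τ ≤ M] ≤ ∫₀^M C t^{-α} dt = C M^{1-α} / (1 - α)`, finite because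
`α < 1`. Since `τ_i` and `e_i` are independent and `𝔼 e_i = 1`, the `L¹` norm of the normalized sum
with `M = n^{(1-ε)/α}` is at most
`C / (1 - α) · n^{-1/α} · n · M^{1-α} = C / (1 - α) · n^{-ε(1-α)/α}`, which tends to `0`;
convergence in `L¹` implies convergence in probability.
-/

open MeasureTheory ProbabilityTheory Filter Topology Set

section

variable {Ω : Type*} [MeasurableSpace Ω] {μ : Measure Ω}

lemma lintegral_enorm_eq_one_of_exp_tail [IsProbabilityMeasure μ] {E : Ω → ℝ}
    (hE : Measurable E)
    (hexp : ∀ x : ℝ, 0 ≤ x → μ {ω | x ≤ E ω} = ENNReal.ofReal (Real.exp (-x))) :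
    ∫⁻ ω, ‖E ω‖ₑ ∂μ = 1 := by
  have hE0 : 0 ≤ᵐ[μ] E := by
    have : μ {ω | 0 ≤ E ω} = 1 := by simpa using hexp 0 le_rfl
    exact (prob_compl_eq_zero_iff (measurableSet_le measurable_const hE)).2 this
  have hint : IntegrableOn (fun t : ℝ => Real.exp (-t)) (Ioi 0) := by
    simpa using exp_neg_integrableOn_Ioi 0 one_pos
  calc ∫⁻ ω, ‖E ω‖ₑ ∂μ = ∫⁻ ω, ENNReal.ofReal (E ω) ∂μ :=
        lintegral_congr_ae (hE0.mono fun ω h => Real.enorm_of_nonneg h)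
    _ = ∫⁻ t in Ioi 0, ENNReal.ofReal (Real.exp (-t)) := by
        rw [lintegral_eq_lintegral_meas_le μ hE0 hE.aemeasurable]
        exact setLIntegral_congr_fun measurableSet_Ioi fun t ht => hexp t (le_of_lt ht)
    _ = 1 := by
        rw [← ofReal_integral_eq_lintegral_ofReal hint
          (ae_of_all _ fun t => (Real.exp_pos _).le), integral_exp_neg_Ioi_zero,
          ENNReal.ofReal_one]

lemma exists_measure_ge_le_rpow_of_tendsto [IsFiniteMeasure μ] {X : Ω → ℝ} {α L : ℝ}
    (hα : 0 ≤ α)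
    (htail : Tendsto (fun t : ℝ => t ^ α * (μ {ω | t ≤ X ω}).toReal) atTop (𝓝 L)) :
    ∃ C, 0 ≤ C ∧ ∀ t, 0 < t → μ {ω | t ≤ X ω} ≤ ENNReal.ofReal (C * t ^ (-α)) := by
  obtain ⟨t₀, ht₀⟩ := eventually_atTop.1
    ((htail.eventually (eventually_le_nhds (lt_add_one L))).and (eventually_gt_atTop 0))
  have hC : 0 ≤ t₀ ^ α * μ.real univ :=
    mul_nonneg (Real.rpow_nonneg (ht₀ t₀ le_rfl).2.le _) measureReal_nonneg
  refine ⟨max (L + 1) (t₀ ^ α * μ.real univ), le_max_of_le_right hC, fun t ht => ?_⟩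
  rw [← ofReal_measureReal, ENNReal.ofReal_le_ofReal_iff
      (mul_nonneg (le_max_of_le_right hC) (by positivity)),
    Real.rpow_neg ht.le, ← div_eq_mul_inv, le_div_iff₀ (by positivity), mul_comm]
  rcases le_total t₀ t with hle | hle
  · exact (ht₀ t hle).1.trans (le_max_left _ _)
  · refine le_max_of_le_right ?_
    gcongr
    · exact Real.rpow_nonneg (ht.le.trans hle) _
    · exact measure_ne_top _ _
    · exact subset_univ _

lemma lintegral_rpow_neg_Ioc_zero {α C M : ℝ} (hα : α < 1) (hC : 0 ≤ C) (hM : 0 ≤ M) :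
    ∫⁻ t in Ioc 0 M, ENNReal.ofReal (C * t ^ (-α)) =
      ENNReal.ofReal (C / (1 - α) * M ^ (1 - α)) := by
  have hint : IntegrableOn (fun t : ℝ => C * t ^ (-α)) (Ioc 0 M) := by
    rw [← intervalIntegrable_iff_integrableOn_Ioc_of_le hM]
    exact (intervalIntegral.intervalIntegrable_rpow' (by linarith)).const_mul C
  have hnn : 0 ≤ᵐ[volume.restrict (Ioc 0 M)] fun t : ℝ => C * t ^ (-α) :=
    (ae_restrict_iff' measurableSet_Ioc).2 (ae_of_all _ fun t ht =>
      mul_nonneg hC (Real.rpow_nonneg ht.1.le _))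
  rw [← ofReal_integral_eq_lintegral_ofReal hint hnn, ← intervalIntegral.integral_of_le hM,
    intervalIntegral.integral_const_mul, integral_rpow (Or.inl (by linarith)),
    Real.zero_rpow (by linarith), sub_zero, neg_add_eq_sub]
  ring_nf

lemma lintegral_enorm_indicator_Iic_le {X : Ω → ℝ} (hX : Measurable X) (hX0 : ∀ ω, 0 ≤ X ω)
    {α C M : ℝ} (hα : α < 1) (hC : 0 ≤ C) (hM : 0 ≤ M)
    (htail : ∀ t, 0 < t → μ {ω | t ≤ X ω} ≤ ENNReal.ofReal (C * t ^ (-α))) :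
    ∫⁻ ω, ‖(Iic M).indicator id (X ω)‖ₑ ∂μ ≤ ENNReal.ofReal (C / (1 - α) * M ^ (1 - α)) := by
  set Y : Ω → ℝ := fun ω => (Iic M).indicator id (X ω)
  have hY0 : ∀ ω, 0 ≤ Y ω := fun ω => indicator_nonneg (fun _ _ => hX0 ω) _
  have hYX : ∀ ω, Y ω ≤ X ω := fun ω => indicator_le_self' (fun _ _ => hX0 ω) _
  have hYM : ∀ ω, Y ω ≤ M := fun ω => indicator_le' (fun _ h => h) (fun _ _ => hM) _
  have hYmeas : Measurable Y := (measurable_id.indicator measurableSet_Iic).comp hX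
  calc ∫⁻ ω, ‖Y ω‖ₑ ∂μ = ∫⁻ t in Ioi 0, μ {ω | t ≤ Y ω} := by
        rw [← lintegral_eq_lintegral_meas_le μ (ae_of_all _ hY0) hYmeas.aemeasurable]
        exact lintegral_congr fun ω => Real.enorm_of_nonneg (hY0 ω)
    _ ≤ ∫⁻ t in Ioi 0, (Iic M).indicator (fun t => ENNReal.ofReal (C * t ^ (-α))) t := by
        refine setLIntegral_mono' measurableSet_Ioi fun t ht => ?_
        by_cases htM : t ≤ M
        · rw [indicator_of_mem (mem_Iic.2 htM)]
          exact (measure_mono fun ω hω => le_trans hω (hYX ω)).trans (htail t ht)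
        · have : {ω | t ≤ Y ω} = ∅ :=
            eq_empty_of_forall_notMem fun ω hω => htM (le_trans hω (hYM ω))
          simp [this]
    _ = ENNReal.ofReal (C / (1 - α) * M ^ (1 - α)) := by
        rw [lintegral_indicator measurableSet_Iic, Measure.restrict_restrict measurableSet_Iic,
          Iic_inter_Ioi, lintegral_rpow_neg_Ioc_zero hα hC hM]

lemma lintegral_enorm_indicator_preimage_mul_of_indepFun {X Y : Ω → ℝ} (hX : Measurable X)
    (hY : Measurable Y) (hXY : IndepFun X Y μ) {s : Set ℝ} (hs : MeasurableSet s) :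
    ∫⁻ ω, ‖(X ⁻¹' s).indicator (fun ω => X ω * Y ω) ω‖ₑ ∂μ
      = (∫⁻ ω, ‖s.indicator id (X ω)‖ₑ ∂μ) * ∫⁻ ω, ‖Y ω‖ₑ ∂μ := by
  have hF : Measurable fun x : ℝ => ‖s.indicator id x‖ₑ :=
    (measurable_id.indicator hs).enorm
  calc _ = ∫⁻ ω, ‖s.indicator id (X ω)‖ₑ * ‖Y ω‖ₑ ∂μ := by
        refine lintegral_congr fun ω => ?_
        by_cases h : X ω ∈ s
        · simp [indicator_of_mem h, indicator_of_mem (show ω ∈ X ⁻¹' s from h), enorm_mul]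
        · simp [indicator_of_notMem h, indicator_of_notMem (show ω ∉ X ⁻¹' s from h)]
    _ = _ := lintegral_mul_eq_lintegral_mul_lintegral_of_indepFun'' (hF.comp hX).aemeasurable
        hY.enorm.aemeasurable (hXY.comp hF measurable_enorm)

lemma lintegral_enorm_mul_sum_indicator_mul_le {τ e : ℕ → Ω → ℝ}
    (hτmeas : ∀ i, Measurable (τ i)) (hemeas : ∀ i, Measurable (e i))
    (hτident : ∀ i, IdentDistrib (τ i) (τ 0) μ μ)
    (heident : ∀ i, IdentDistrib (e i) (e 0) μ μ)
    (hindep : ∀ i, IndepFun (τ i) (e i) μ) (c : ℝ) (n : ℕ) (M : ℝ) :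
    ∫⁻ ω, ‖c * ∑ i ∈ Finset.range n,
        {ω' | τ i ω' ≤ M}.indicator (fun ω' => τ i ω' * e i ω') ω‖ₑ ∂μ
      ≤ ‖c‖ₑ * (n * ((∫⁻ ω, ‖(Iic M).indicator id (τ 0 ω)‖ₑ ∂μ) * ∫⁻ ω, ‖e 0 ω‖ₑ ∂μ)) := by
  have hF : Measurable fun x : ℝ => ‖(Iic M).indicator id x‖ₑ :=
    (measurable_id.indicator measurableSet_Iic).enorm
  have hterm : ∀ i, ∫⁻ ω, ‖{ω' | τ i ω' ≤ M}.indicator (fun ω' => τ i ω' * e i ω') ω‖ₑ ∂μ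
      = (∫⁻ ω, ‖(Iic M).indicator id (τ 0 ω)‖ₑ ∂μ) * ∫⁻ ω, ‖e 0 ω‖ₑ ∂μ := fun i =>
    (lintegral_enorm_indicator_preimage_mul_of_indepFun (hτmeas i) (hemeas i) (hindep i)
      measurableSet_Iic).trans (congr_arg₂ _ ((hτident i).comp hF).lintegral_eq
        ((heident i).comp measurable_enorm).lintegral_eq)
  rw [lintegral_congr fun ω => enorm_mul _ _, lintegral_const_mul' _ _ enorm_ne_top]
  gcongr
  calc _ ≤ ∫⁻ ω, ∑ i ∈ Finset.range n,
          ‖{ω' | τ i ω' ≤ M}.indicator (fun ω' => τ i ω' * e i ω') ω‖ₑ ∂μ :=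
        lintegral_mono fun ω => enorm_sum_le _ _
    _ = _ := by
        rw [lintegral_finsetSum' _ fun i _ => (Measurable.indicator (by fun_prop)
          (measurableSet_le (hτmeas i) measurable_const)).enorm.aemeasurable]
        simp [hterm]

end

lemma tendsto_natCast_rpow_neg_inv_mul_self_mul_rpow_rpow {α ε : ℝ} (hα0 : 0 < α) (hα1 : α < 1)
    (hε : 0 < ε) :
    Tendsto (fun n : ℕ => (n : ℝ) ^ (-(1 / α)) * n * ((n : ℝ) ^ ((1 - ε) / α)) ^ (1 - α))
      atTop (𝓝 0) := by
  have hexp : 0 < ε * (1 - α) / α := div_pos (mul_pos hε (by linarith)) hα0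
  refine ((tendsto_rpow_neg_atTop hexp).comp tendsto_natCast_atTop_atTop).congr' ?_
  filter_upwards [eventually_gt_atTop 0] with n hn
  have hn : (0 : ℝ) < n := Nat.cast_pos.2 hn
  rw [Function.comp_apply, ← Real.rpow_add_one hn.ne', ← Real.rpow_mul hn.le,
    ← Real.rpow_add hn]
  congr 1
  field_simp
  ring

theorem btm_shallow_traps_negligible_general
    {Ω : Type*} [MeasureSpace Ω] [IsProbabilityMeasure (ℙ : Measure Ω)]
    (τ e : ℕ → Ω → ℝ)
    (hτmeas : ∀ i, Measurable (τ i)) (hemeas : ∀ i, Measurable (e i))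
    (hτpos : ∀ i ω, 0 < τ i ω)
    (hτident : ∀ i, IdentDistrib (τ i) (τ 0) ℙ ℙ)
    (heident : ∀ i, IdentDistrib (e i) (e 0) ℙ ℙ)
    (hindep : iIndepFun
      (Sum.elim τ e) ℙ)
    (hexp : ∀ x : ℝ, 0 ≤ x → ℙ {ω | x ≤ e 0 ω} = ENNReal.ofReal (Real.exp (-x)))
    (α : ℝ) (hα0 : 0 < α) (hα1 : α < 1)
    (htail : Tendsto (fun t : ℝ => t ^ α * (ℙ {ω | t ≤ τ 0 ω}).toReal)
      atTop (𝓝 1))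
    (ε : ℝ) (hε0 : 0 < ε) :
    TendstoInMeasure ℙ
      (fun (n : ℕ) (ω : Ω) => (n : ℝ) ^ (-(1 / α)) *
        ∑ i ∈ Finset.range n,
          Set.indicator {ω' | τ i ω' ≤ (n : ℝ) ^ ((1 - ε) / α)}
            (fun ω' => τ i ω' * e i ω') ω)
      atTop (fun _ => (0 : ℝ)) := by
  obtain ⟨C, hC, hτtail⟩ := exists_measure_ge_le_rpow_of_tendsto hα0.le htail
  have hpair : ∀ i, IndepFun (τ i) (e i) ℙ := fun i =>
    hindep.indepFun (show Sum.inl i ≠ Sum.inr i from Sum.inl_ne_inr)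
  refine tendstoInMeasure_of_tendsto_eLpNorm one_ne_zero (fun n => ?_) aestronglyMeasurable_const ?_
  · exact ((Finset.measurable_sum _ fun i _ => Measurable.indicator (by fun_prop)
      (measurableSet_le (hτmeas i) measurable_const)).const_mul _).aestronglyMeasurable
  have hr := ENNReal.tendsto_ofReal ((tendsto_natCast_rpow_neg_inv_mul_self_mul_rpow_rpow
    hα0 hα1 hε0).const_mul (C / (1 - α)))
  rw [mul_zero, ENNReal.ofReal_zero] at hr
  refine tendsto_of_tendsto_of_tendsto_of_le_of_le tendsto_const_nhds hr (fun _ => zero_le)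
    fun n => ?_
  simp only [eLpNorm_one_eq_lintegral_enorm, Pi.sub_apply, sub_zero]
  grw [lintegral_enorm_mul_sum_indicator_mul_le hτmeas hemeas hτident heident hpair]
  rw [lintegral_enorm_eq_one_of_exp_tail (hemeas 0) hexp, mul_one]
  grw [lintegral_enorm_indicator_Iic_le (hτmeas 0) (fun ω => (hτpos 0 ω).le) hα1 hC
    (by positivity) hτtail]
  rw [Real.enorm_of_nonneg (by positivity), ← ENNReal.ofReal_natCast,
    ← ENNReal.ofReal_mul (Nat.cast_nonneg n), ← ENNReal.ofReal_mul (by positivity)]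
  exact le_of_eq (congr_arg ENNReal.ofReal (by ring))

/-- For the totally directed Bouchaud trap model with heavy tails of index `α ∈ (0,1)`,
the normalized total time spent in traps of depth at most `n^{(1-ε)/α}` converges to `0`
in probability, for every `ε ∈ (0,1)`. -/
theorem btm_shallow_traps_negligible
    {Ω : Type*} [MeasureSpace Ω] [IsProbabilityMeasure (ℙ : Measure Ω)]
    (τ e : ℕ → Ω → ℝ)
    (hτmeas : ∀ i, Measurable (τ i)) (hemeas : ∀ i, Measurable (e i))
    (hτpos : ∀ i ω, 0 < τ i ω)
    (hτident : ∀ i, IdentDistrib (τ i) (τ 0) ℙ ℙ)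
    (heident : ∀ i, IdentDistrib (e i) (e 0) ℙ ℙ)
    (hindep : iIndepFun
      (Sum.elim τ e) ℙ)
    (hexp : ∀ x : ℝ, 0 ≤ x → ℙ {ω | x ≤ e 0 ω} = ENNReal.ofReal (Real.exp (-x)))
    (α : ℝ) (hα0 : 0 < α) (hα1 : α < 1)
    (htail : Tendsto (fun t : ℝ => t ^ α * (ℙ {ω | t ≤ τ 0 ω}).toReal)
      atTop (𝓝 1))
    (ε : ℝ) (hε0 : 0 < ε) (hε1 : ε < 1) :
    TendstoInMeasure ℙ
      (fun (n : ℕ) (ω : Ω) => (n : ℝ) ^ (-(1 / α)) *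
        ∑ i ∈ Finset.range n,
          Set.indicator {ω' | τ i ω' ≤ (n : ℝ) ^ ((1 - ε) / α)}
            (fun ω' => τ i ω' * e i ω') ω)
      atTop (fun _ => (0 : ℝ)) :=
  btm_shallow_traps_negligible_general τ e hτmeas hemeas hτpos hτident heident hindep hexp α hα0 hα1
    htail ε hε0
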